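/- arXiv:2204.12419 — 2 statements merged into one kernel-verified Lean document; each statement's English description precedes it below -/
import Mathlib

section
/- Let a_1, ..., a_m be the columns of a totally unimodular matrix A. If sum_{i=1}^m λ_i a_i = 0 with real coefficients λ_i, not all zero, then there exists a minimal linearly dependent subset C of columns (a circuit) contained in the support of λ, together with signs ε_i ∈ {1,-1} for i ∈ C, such that sum_{i∈C} ε_i a_i = 0 and ε_i agrees with the sign of λ_i for each i ∈ C. -/
open Finset

/-- A set of column indices of `A` is dependent if the corresponding columns are
linearly dependent. -/
def Matrix.ColDep {m n : Type*} (A : Matrix m n ℝ) (S : Finset n) : Prop :=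
  ¬ LinearIndependent ℝ (fun i : S => A.transpose i.1)

/-- A circuit: a minimal linearly dependent set of column indices. -/
def Matrix.IsCircuit {m n : Type*} (A : Matrix m n ℝ) (C : Finset n) : Prop :=
  A.ColDep C ∧ ∀ S ⊂ C, ¬ A.ColDep S

/-!
Among the nonzero kernel vectors of `A` that are sign-conformal to `λ`, take one, `y`, of minimal
support. Its support is a circuit: a dependence `z` on a proper subset could be subtracted from `y`
with the largest step `t` that flips no sign, giving a conformal kernel vector of smaller support.
On a circuit `C` of a totally unimodular matrix, `|y i|` is constant: the columns of `C \ {j}` are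
independent, so some square submatrix of them has determinant `±1`, and by Cramer's rule
`-y i / y j` is a quotient of two minors of `A`, hence `±1`. Then `ε := y / |y j|`.
-/

theorem exists_sum_smul_eq_zero_of_not_linearIndepOn {R M ι : Type*} [Ring R] [AddCommGroup M]
    [Module R M] [Fintype ι] {v : ι → M} {S : Finset ι} (h : ¬LinearIndepOn R v ↑S) :
    ∃ z : ι → R, ∑ i, z i • v i = 0 ∧ z ≠ 0 ∧ ∀ i, z i ≠ 0 → i ∈ S := by
  classical
  obtain ⟨f, hf, i, hi, hfi⟩ := not_linearIndepOn_finset_iff.mp h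
  refine ⟨fun i => if i ∈ S then f i else 0, ?_, fun h => hfi ?_, fun i hi => ?_⟩
  · simpa [ite_smul, sum_ite_mem] using hf
  · simpa [hi] using congrFun h i
  · by_contra hiS
    simp [hiS] at hi

section SignConforms

variable {𝕜 n : Type*} [Field 𝕜] [LinearOrder 𝕜]

def SignConforms (y x : n → 𝕜) : Prop :=
  ∀ i, y i ≠ 0 → 0 < y i * x i

theorem SignConforms.ne_zero {y x : n → 𝕜} (h : SignConforms y x) {i : n} (hi : y i ≠ 0) :
    x i ≠ 0 := by
  rintro hx
  simpa [hx] using h i hi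

variable [IsStrictOrderedRing 𝕜]

theorem SignConforms.refl (x : n → 𝕜) : SignConforms x x :=
  fun _ hi => mul_self_pos.mpr hi

theorem SignConforms.trans {z y x : n → 𝕜} (hzy : SignConforms z y) (hyx : SignConforms y x) :
    SignConforms z x := by
  intro i hi
  have h1 := hzy i hi
  have h2 := hyx i (hzy.ne_zero hi)
  have h3 : 0 < z i * x i * (y i * y i) :=
    calc 0 < z i * y i * (y i * x i) := mul_pos h1 h2
      _ = z i * x i * (y i * y i) := by ring
  exact pos_of_mul_pos_left h3 (mul_self_nonneg _)

theorem exists_signConforms_sub_smul [Fintype n] {x z : n → 𝕜} (hz : z ≠ 0)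
    (hzx : ∀ i, z i ≠ 0 → x i ≠ 0) :
    ∃ t : 𝕜, ∃ j, x j ≠ 0 ∧ (x - t • z) j = 0 ∧ SignConforms (x - t • z) x := by
  classical
  obtain ⟨j, hj, hmin⟩ := exists_min_image {i | z i ≠ 0} (fun i => |x i| / |z i|)
    (by simpa [Finset.Nonempty, funext_iff] using hz)
  have hzj : z j ≠ 0 := (mem_filter.mp hj).2
  -- `|t|` is the least ratio `|x i| / |z i|`, so subtracting `t • z` flips no sign of `x`.
  set t := x j / z j
  have hbound : ∀ i, |t * z i| ≤ |x i| := by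
    intro i
    by_cases hzi : z i = 0
    · simp [hzi]
    · rw [abs_mul, abs_div, ← le_div_iff₀ (abs_pos.mpr hzi)]
      exact hmin i (by simpa using hzi)
  refine ⟨t, j, hzx j hzj, by simp [t, hzj], fun i hi => ?_⟩
  simp only [Pi.sub_apply, Pi.smul_apply, smul_eq_mul] at hi ⊢
  have hxi : x i ≠ 0 := by
    rintro hxi
    have := hbound i
    rw [hxi, abs_zero, abs_nonpos_iff] at this
    exact hi (by rw [hxi, this, sub_zero])
  have hcross : t * z i * x i ≤ x i * x i :=
    calc t * z i * x i ≤ |t * z i * x i| := le_abs_self _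
      _ = |t * z i| * |x i| := abs_mul _ _
      _ ≤ |x i| * |x i| := mul_le_mul_of_nonneg_right (hbound i) (abs_nonneg _)
      _ = x i * x i := abs_mul_abs_self _
  exact lt_of_le_of_ne (by linarith) (mul_ne_zero hi hxi).symm

theorem exists_signConforms_minimal_dependence [Fintype n] {V : Type*} [AddCommGroup V]
    [Module 𝕜 V] (v : n → V) {x : n → 𝕜} (hx : ∑ i, x i • v i = 0) (hx0 : x ≠ 0) :
    ∃ y : n → 𝕜, SignConforms y x ∧ ∑ i, y i • v i = 0 ∧ y ≠ 0 ∧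
      ∀ S ⊂ ({i | y i ≠ 0} : Finset n), LinearIndepOn 𝕜 v S := by
  classical
  induction hk : #{i | x i ≠ 0} using Nat.strong_induction_on generalizing x with
  | _ k ih =>
  by_cases hmin : ∀ S ⊂ ({i | x i ≠ 0} : Finset n), LinearIndepOn 𝕜 v S
  · exact ⟨x, .refl x, hx, hx0, hmin⟩
  obtain ⟨S, hS, hdep⟩ := not_forall₂.mp hmin
  obtain ⟨z, hz, hz0, hzS⟩ := exists_sum_smul_eq_zero_of_not_linearIndepOn hdep
  have hzx : ∀ i, z i ≠ 0 → x i ≠ 0 := fun i hi => (mem_filter.mp (hS.subset (hzS i hi))).2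
  obtain ⟨t, j, hxj, hx'j, hconf⟩ := exists_signConforms_sub_smul hz0 hzx
  have hx' : ∑ i, (x - t • z) i • v i = 0 := by
    simp only [Pi.sub_apply, Pi.smul_apply, sub_smul, smul_eq_mul, mul_smul, sum_sub_distrib,
      ← smul_sum, hx, hz, smul_zero, sub_zero]
  have hx'0 : x - t • z ≠ 0 := by
    obtain ⟨i, hi, hiS⟩ := exists_of_ssubset hS
    have hzi : z i = 0 := by_contra fun h => hiS (hzS i h)
    intro h
    have := congrFun h i
    simp only [Pi.sub_apply, Pi.smul_apply, hzi, smul_zero, sub_zero, Pi.zero_apply] at this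
    exact (mem_filter.mp hi).2 this
  have hlt : #{i | (x - t • z) i ≠ 0} < k := by
    rw [← hk]
    refine card_lt_card ((ssubset_iff_of_subset fun i hi => ?_).mpr ⟨j, ?_, ?_⟩)
    · simpa using hconf.ne_zero (mem_filter.mp hi).2
    · simpa using hxj
    · simpa using hx'j
  obtain ⟨y, hyx', hy⟩ := ih _ hlt hx' hx'0 rfl
  exact ⟨y, hyx'.trans hconf, hy⟩

end SignConforms

namespace Matrix

theorem exists_det_submatrix_ne_zero_of_linearIndependent_col {K m ι : Type*} [Field K] [Fintype m] [Fintype ι]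
    [DecidableEq ι] (M : Matrix m ι K) (hM : LinearIndependent K M.col) :
    ∃ r : ι → m, (M.submatrix r id).det ≠ 0 := by
  obtain ⟨κ, a, -, hspan, hli⟩ := exists_linearIndependent' K M.row
  have hrows : Submodule.span K (Set.range M.row) = ⊤ := by
    apply Submodule.eq_top_of_finrank_eq
    rw [← rank_eq_finrank_span_row, ← rank_transpose, hM.rank_matrix,
      Module.finrank_fintype_fun_eq_card]
  let b : Module.Basis κ K (ι → K) := .mk hli (by rw [hspan, hrows])
  let e : ι ≃ κ := (Pi.basisFun K ι).indexEquiv b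
  refine ⟨a ∘ e, ((isUnit_iff_isUnit_det _).mp ?_).ne_zero⟩
  exact linearIndependent_rows_iff_isUnit.mp (hli.comp e e.injective)

theorem IsTotallyUnimodular.mem_range_signType_cast_of_mulVec_eq {R m n ι : Type*} [CommRing R]
    [Fintype ι] [DecidableEq ι] {A : Matrix m n R} (hA : A.IsTotallyUnimodular)
    {r : ι → m} {g : ι → n} (hdet : (A.submatrix r g).det ≠ 0) {x : ι → R} {j : n}
    (hx : A.submatrix r g *ᵥ x = fun p => A (r p) j) (q : ι) :
    x q ∈ Set.range SignType.cast := by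
  classical
  rw [isTotallyUnimodular_iff_fintype] at hA
  obtain ⟨s, hs⟩ := hA ι r g
  obtain ⟨t, ht⟩ := hA ι r (Function.update g q j)
  have hcramer : (A.submatrix r g).det * x q = (A.submatrix r (Function.update g q j)).det := by
    -- Cramer's rule; its numerator is again a square submatrix of `A`.
    have := congrFun (cramer_eq_adjugate_mulVec (A.submatrix r g) (A.submatrix r g *ᵥ x)) q
    rw [mulVec_mulVec, adjugate_mul, smul_mulVec, one_mulVec, hx, cramer_apply] at this
    have hupd : (A.submatrix r g).updateCol q (fun p => A (r p) j)
        = A.submatrix r (Function.update g q j) := by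
      ext p p'
      by_cases h : p' = q
      · subst h; simp
      · simp [h]
    rw [← hupd, this, Pi.smul_apply, smul_eq_mul]
  have hs1 : s * s = 1 := by
    rcases s with _ | _ | _
    · exact absurd hs.symm (by simpa using hdet)
    all_goals decide
  refine ⟨s * t, ?_⟩
  rw [SignType.coe_mul, hs, ht, ← hcramer, ← mul_assoc, ← hs, ← SignType.coe_mul, hs1,
    SignType.coe_one, one_mul]

theorem IsTotallyUnimodular.mem_range_signType_cast_of_sum_smul_eq {K m n : Type*} [Field K]
    [Fintype m] {A : Matrix m n K} (hA : A.IsTotallyUnimodular) {B : Finset n}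
    (hB : LinearIndepOn K (fun i => Aᵀ i) ↑B) {x : n → K} {j : n}
    (hx : ∑ i ∈ B, x i • Aᵀ i = Aᵀ j) {i : n} (hi : i ∈ B) : x i ∈ Set.range SignType.cast := by
  classical
  obtain ⟨r, hr⟩ := exists_det_submatrix_ne_zero_of_linearIndependent_col (A.submatrix id ((↑) : B → n)) hB
  refine hA.mem_range_signType_cast_of_mulVec_eq (x := fun q : B => x q) (j := j) hr ?_ ⟨i, hi⟩
  ext p
  have := congrFun hx (r p)
  simp only [Finset.sum_apply, Pi.smul_apply, transpose_apply, smul_eq_mul] at this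
  simp only [mulVec, dotProduct, submatrix_apply, id, mul_comm (A _ _)]
  rw [sum_coe_sort B (fun i => x i * A (r p) i), this]

theorem IsCircuit.abs_eq {m n : Type*} [Fintype m] {A : Matrix m n ℝ}
    (hA : A.IsTotallyUnimodular) {C : Finset n} (hC : A.IsCircuit C) {y : n → ℝ}
    (hy : ∑ i ∈ C, y i • Aᵀ i = 0) (hyC : ∀ i ∈ C, y i ≠ 0) {i j : n} (hi : i ∈ C)
    (hj : j ∈ C) : |y i| = |y j| := by
  classical
  obtain rfl | hij := eq_or_ne i j
  · rfl
  have hB : LinearIndepOn ℝ (fun i => Aᵀ i) ↑(C.erase j) :=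
    of_not_not (hC.2 _ (erase_ssubset hj))
  have hsplit := add_sum_erase C (fun i => y i • Aᵀ i) hj
  rw [hy, add_eq_zero_iff_eq_neg'] at hsplit
  have hx : ∑ i ∈ C.erase j, (-(y i / y j)) • Aᵀ i = Aᵀ j := by
    calc ∑ i ∈ C.erase j, (-(y i / y j)) • Aᵀ i
        = -(y j)⁻¹ • ∑ i ∈ C.erase j, y i • Aᵀ i := by
          rw [smul_sum]
          refine sum_congr rfl fun i _ => ?_
          rw [smul_smul, neg_mul, div_eq_inv_mul]
      _ = Aᵀ j := by
          rw [hsplit, smul_neg, neg_smul, neg_neg, smul_smul, inv_mul_cancel₀ (hyC j hj), one_smul]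
  obtain ⟨s, hs⟩ := hA.mem_range_signType_cast_of_sum_smul_eq hB hx (mem_erase.mpr ⟨hij, hi⟩)
  have hratio : |y i / y j| = 1 := by
    rw [← abs_neg, ← hs]
    rcases s with _ | _ | _
    · exact absurd hs.symm (by simpa using div_ne_zero (hyC i hi) (hyC j hj))
    all_goals simp
  rwa [abs_div, div_eq_one_iff_eq (abs_ne_zero.mpr (hyC j hj))] at hratio

end Matrix

/-- If `∑ λ_i a_i = 0` with the `λ_i` not all zero, where `a_i` are the columns
of a totally unimodular matrix, then there is a circuit `C` contained in the support of `λ`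
and signs `ε_i ∈ {1,-1}` on `C` with `∑_{i∈C} ε_i a_i = 0`, the sign `ε_i` agreeing with the
sign of `λ_i` for all `i ∈ C`. -/
theorem tu_circuit_in_support {m n : Type*} [Fintype m] [Fintype n]
    (A : Matrix m n ℝ) (hA : A.IsTotallyUnimodular)
    (lam : n → ℝ) (hdep : ∑ i, lam i • A.transpose i = 0) (hne : lam ≠ 0) :
    ∃ (C : Finset n) (ε : n → ℝ),
      A.IsCircuit C ∧
      (∀ i ∈ C, lam i ≠ 0) ∧
      (∀ i ∈ C, ε i = 1 ∨ ε i = -1) ∧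
      (∑ i ∈ C, ε i • A.transpose i) = 0 ∧
      (∀ i ∈ C, (ε i = 1 → 0 < lam i) ∧ (ε i = -1 → lam i < 0)) := by
  classical
  obtain ⟨y, hylam, hy, hy0, hmin⟩ :=
    exists_signConforms_minimal_dependence (fun i => A.transpose i) hdep hne
  set C : Finset n := {i | y i ≠ 0}
  have hyC : ∀ i ∈ C, y i ≠ 0 := fun i hi => (mem_filter.mp hi).2
  have hsumC : ∑ i ∈ C, y i • A.transpose i = 0 := by
    refine (sum_filter_of_ne (p := (y · ≠ 0)) fun i _ h hyi => h ?_).trans hy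
    rw [hyi, zero_smul]
  obtain ⟨j, hj⟩ : C.Nonempty := by simpa [Finset.Nonempty, C, funext_iff] using hy0
  have hC : A.IsCircuit C :=
    ⟨fun hind => hyC j hj (linearIndepOn_finset_iff.mp hind y hsumC j hj),
      fun S hS => not_not.mpr (hmin S hS)⟩
  have hyj : 0 < |y j| := abs_pos.mpr (hyC j hj)
  refine ⟨C, fun i => y i / |y j|, hC, fun i hi => hylam.ne_zero (hyC i hi), fun i hi => ?_, ?_,
    fun i hi => ?_⟩
  · rcases (abs_eq (abs_nonneg _)).mp (hC.abs_eq hA hsumC hyC hi hj) with h | h <;>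
      simp [h, hyj.ne']
  · simp_rw [div_eq_inv_mul, mul_smul, ← smul_sum, hsumC, smul_zero]
  · have hpos : 0 < y i / |y j| * lam i := by
      rw [div_mul_eq_mul_div]
      exact div_pos (hylam i (hyC i hi)) hyj
    constructor <;> intro h <;> simp only at h <;> rw [h] at hpos <;> linarith
end

section
/- Let A and A' be two totally unimodular matrices whose columns a_1,...,a_m and a'_1,...,a'_m realize the same regular oriented matroid (i.e., have the same signed circuits). Then the map sending sum λ_i a_i (with λ_i ≥ 0, sum λ_i = 1) to sum λ_i a'_i is a well-defined bijection from the polytope conv{a_1,...,a_m} to conv{a'_1,...,a'_m}. -/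
/-!
Both root polytopes are images of the standard simplex under the linear maps `λ ↦ A λ` and
`λ ↦ A' λ`, so the map is well defined and bijective as soon as the two maps have the same kernel.
The kernel of a matrix is generated by vectors supported on circuits: subtracting a suitable
multiple of a circuit vector lowers the support of a kernel vector. For a totally unimodular
matrix, Cramer's rule shows that every circuit carries a kernel vector with entries `0, ±1`,
i.e. the indicator vector of a signed circuit. Since `A` and `A'` share their signed circuits,
these vectors lie in both kernels, so the kernels coincide.
-/

open Finset

/-- A signed circuit: a circuit `C⁺ ⊔ C⁻` with `∑_{i∈C⁺} a_i - ∑_{i∈C⁻} a_i = 0`. -/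
def Matrix.IsSignedCircuit {m n : Type*} [Fintype m] [DecidableEq n]
    (A : Matrix m n ℝ) (Cp Cm : Finset n) : Prop :=
  Disjoint Cp Cm ∧ A.IsCircuit (Cp ∪ Cm) ∧
    (∑ i ∈ Cp, A.transpose i) - (∑ i ∈ Cm, A.transpose i) = 0

namespace LinearMap

variable {R M N P : Type*} [Ring R] [AddCommGroup M] [AddCommGroup N] [AddCommGroup P]
  [Module R M] [Module R N] [Module R P]

theorem apply_invFun_apply_of_ker_le {f : M →ₗ[R] N} {g : M →ₗ[R] P} (h : ker f ≤ ker g)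
    (x : M) : g (Function.invFun f (f x)) = g x := by
  have hx : f (Function.invFun f (f x)) = f x := Function.invFun_eq ⟨x, rfl⟩
  rw [← sub_eq_zero, ← map_sub]
  exact h (by rw [mem_ker, map_sub, hx, sub_self])

theorem bijOn_comp_invFun_image_of_ker_eq {f : M →ₗ[R] N} {g : M →ₗ[R] P} (h : ker f = ker g)
    (s : Set M) : Set.BijOn (g ∘ Function.invFun f) (f '' s) (g '' s) := by
  have hφ := apply_invFun_apply_of_ker_le h.le
  refine ⟨?_, ?_, ?_⟩
  · rintro _ ⟨x, hx, rfl⟩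
    exact ⟨x, hx, (hφ x).symm⟩
  · rintro _ ⟨x, -, rfl⟩ _ ⟨y, -, rfl⟩ hxy
    simp only [Function.comp_apply, hφ] at hxy
    rw [← sub_eq_zero, ← map_sub, ← mem_ker, ← h] at hxy
    rwa [← sub_eq_zero, ← map_sub]
  · rintro _ ⟨x, hx, rfl⟩
    exact ⟨f x, ⟨x, hx, rfl⟩, hφ x⟩

end LinearMap

namespace Matrix

variable {k n : Type*}

theorem exists_isCircuit_subset {A : Matrix k n ℝ} {S : Finset n} (h : A.ColDep S) :
    ∃ C ⊆ S, A.IsCircuit C := by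
  obtain ⟨C, hCS, hC⟩ := exists_minimal_le_of_wellFoundedLT A.ColDep S h
  exact ⟨C, hCS, hC.1, fun T hTC hT => hTC.2 (hC.2 hT hTC.1)⟩

theorem exists_det_submatrix_ne_zero [Fintype k] {ι : Type*} [Fintype ι] [DecidableEq ι]
    (B : Matrix k ι ℝ) (hB : LinearIndependent ℝ Bᵀ) :
    ∃ f : ι → k, (B.submatrix f id).det ≠ 0 := by
  have hspan : Submodule.span ℝ (Set.range B.row) = ⊤ := by
    apply Submodule.eq_top_of_finrank_eq
    rw [← rank_eq_finrank_span_row, ← rank_transpose, LinearIndependent.rank_matrix (M := Bᵀ) hB,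
      Module.finrank_fintype_fun_eq_card]
  obtain ⟨κ, a, -, hsp, hli⟩ := exists_linearIndependent' ℝ B.row
  let b : Module.Basis κ ℝ (ι → ℝ) := .mk hli (by rw [hsp, hspan])
  let e : ι ≃ κ := (Pi.basisFun ℝ ι).indexEquiv b
  refine ⟨a ∘ e, ?_⟩
  rw [← isUnit_iff_ne_zero, ← isUnit_iff_isUnit_det, ← linearIndependent_rows_iff_isUnit]
  exact hli.comp e e.injective

/-- By Cramer's rule each coefficient is a quotient of two minors of `A`. -/
theorem IsTotallyUnimodular.apply_mem_range_signType_of_sum_smul_eq [Fintype k]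
    {A : Matrix k n ℝ} (hA : A.IsTotallyUnimodular) {D : Finset n} (hD : ¬ A.ColDep D)
    {c : n → ℝ} {i₀ : n} (hc : ∑ i ∈ D, c i • Aᵀ i = Aᵀ i₀) {i : n} (hi : i ∈ D) :
    c i ∈ Set.range (SignType.cast : SignType → ℝ) := by
  classical
  obtain ⟨f, hf⟩ := exists_det_submatrix_ne_zero (A.submatrix id ((↑) : D → n)) (not_not.mp hD)
  set M := A.submatrix f ((↑) : D → n)
  have hM : M *ᵥ (fun j : D => c j) = fun a => A (f a) i₀ := by
    ext a
    have := congrFun hc (f a)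
    rw [← Finset.sum_coe_sort D] at this
    simpa [mulVec, dotProduct, Finset.sum_apply, mul_comm, M] using this
  have hcramer : M.det * c i = (A.submatrix f (Function.update (↑) ⟨i, hi⟩ i₀)).det := by
    have := congrFun (congrArg M.cramer hM) ⟨i, hi⟩
    rw [cramer_eq_adjugate_mulVec, mulVec_mulVec, adjugate_mul, smul_mulVec, one_mulVec,
      cramer_apply, Pi.smul_apply, smul_eq_mul] at this
    rw [this]
    congr 1
    ext a j
    simp only [updateCol_apply, submatrix_apply, Function.update_apply]
    split_ifs <;> rfl
  have hTU := (isTotallyUnimodular_iff_fintype A).mp hA D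
  obtain ⟨s, hs⟩ := hTU f (↑)
  obtain ⟨t, ht⟩ := hTU f (Function.update (↑) ⟨i, hi⟩ i₀)
  rw [← hcramer, ← hs] at ht
  refine ⟨s * t, ?_⟩
  cases s
  · exact absurd hs.symm hf
  · simp [ht]
  · simp [ht]

noncomputable def signVector (Cp Cm : Finset n) : n → ℝ :=
  Set.indicator Cp 1 - Set.indicator Cm 1

theorem support_signVector_subset [DecidableEq n] (Cp Cm : Finset n) :
    Function.support (signVector Cp Cm) ⊆ ↑(Cp ∪ Cm) := by
  intro i hi
  by_contra h
  simp_all [signVector]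

variable [Fintype n]

theorem sum_smul_transpose_eq_mulVec (A : Matrix k n ℝ) (v : n → ℝ) :
    ∑ i, v i • Aᵀ i = A *ᵥ v := by
  simp [mulVec_eq_sum]

theorem sum_smul_transpose_eq_mulVec_of_support_subset (A : Matrix k n ℝ) {v : n → ℝ}
    {S : Finset n} (hv : Function.support v ⊆ S) : ∑ i ∈ S, v i • Aᵀ i = A *ᵥ v := by
  rw [Finset.sum_subset (subset_univ S), sum_smul_transpose_eq_mulVec]
  intro j _ hj
  rw [Function.notMem_support.mp (mt (@hv j) hj), zero_smul]

theorem convexHull_range_transpose [DecidableEq n] (A : Matrix k n ℝ) :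
    convexHull ℝ (Set.range Aᵀ) = A.mulVecLin '' stdSimplex ℝ n := by
  rw [← convexHull_basis_eq_stdSimplex, LinearMap.image_convexHull, ← Set.range_comp]
  congr 2
  ext i : 1
  simp only [Function.comp_apply, mulVecLin_apply, ← Pi.single_apply, Pi.single_comm _ _ i,
    mulVec_single_one]
  rfl

theorem colDep_iff (A : Matrix k n ℝ) (S : Finset n) :
    A.ColDep S ↔ ∃ c : n → ℝ, A *ᵥ c = 0 ∧ c ≠ 0 ∧ Function.support c ⊆ S := by
  classical
  change ¬ LinearIndepOn ℝ (fun i => Aᵀ i : n → k → ℝ) (S : Set n) ↔ _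
  rw [linearIndepOn_iff']
  push Not
  constructor
  · rintro ⟨t, g, hts, hsum, i, hit, hi⟩
    have hsupp : Function.support (Set.indicator t g) ⊆ t := Set.support_indicator_subset
    refine ⟨Set.indicator t g, ?_, fun h => hi ?_, hsupp.trans hts⟩
    · rw [← sum_smul_transpose_eq_mulVec_of_support_subset A hsupp, ← hsum]
      exact Finset.sum_congr rfl fun j hj => by rw [Set.indicator_of_mem (mem_coe.mpr hj)]
    · simpa [hit] using congrFun h i
  · rintro ⟨c, hc, hne, hsupp⟩
    obtain ⟨i, hi⟩ := Function.ne_iff.mp hne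
    refine ⟨S, c, subset_rfl, ?_, i, hsupp hi, hi⟩
    rw [sum_smul_transpose_eq_mulVec_of_support_subset A hsupp, hc]

theorem IsCircuit.nonempty {A : Matrix k n ℝ} {C : Finset n} (hC : A.IsCircuit C) :
    C.Nonempty := by
  obtain ⟨c, -, hne, hsupp⟩ := (colDep_iff A C).mp hC.1
  obtain ⟨i, hi⟩ := Function.ne_iff.mp hne
  exact ⟨i, hsupp hi⟩

theorem IsCircuit.exists_support_eq {A : Matrix k n ℝ} {C : Finset n} (hC : A.IsCircuit C) :
    ∃ c : n → ℝ, A *ᵥ c = 0 ∧ Function.support c = C := by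
  classical
  obtain ⟨c, hc, hne, hsupp⟩ := (colDep_iff A C).mp hC.1
  refine ⟨c, hc, hsupp.antisymm fun i hi => ?_⟩
  by_contra hci
  have hS : (Function.support c).toFinset ⊂ C :=
    (Finset.ssubset_iff_of_subset (Set.toFinset_subset.mpr hsupp)).mpr ⟨i, hi, by simpa using hci⟩
  exact hC.2 _ hS ((colDep_iff A _).mpr ⟨c, hc, hne, by simp⟩)

theorem ker_mulVecLin_le_of_forall_isCircuit (A : Matrix k n ℝ) (W : Submodule ℝ (n → ℝ))
    (hW : ∀ C, A.IsCircuit C → ∃ v ∈ W, A *ᵥ v = 0 ∧ v ≠ 0 ∧ Function.support v ⊆ C) :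
    LinearMap.ker A.mulVecLin ≤ W := by
  classical
  suffices ∀ S : Finset n, ∀ l : n → ℝ, A *ᵥ l = 0 → Function.support l ⊆ S → l ∈ W from
    fun l hl => this univ l hl (by simp)
  intro S
  induction S using Finset.strongInduction with
  | H S ih =>
  intro l hl hlS
  rcases eq_or_ne l 0 with rfl | hne
  · exact W.zero_mem
  obtain ⟨C, hCS, hC⟩ := exists_isCircuit_subset ((colDep_iff A S).mpr ⟨l, hl, hne, hlS⟩)
  obtain ⟨v, hvW, hv, hv0, hvC⟩ := hW C hC
  obtain ⟨i, hi⟩ := Function.ne_iff.mp hv0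
  set l' := l - (l i / v i) • v
  have hl'S : Function.support l' ⊆ S.erase i := by
    intro j hj
    refine Finset.mem_erase.mpr ⟨?_, ?_⟩
    · rintro rfl
      exact hj (by simp [l', div_mul_cancel₀ _ hi])
    · exact (Function.support_sub _ _).trans
        (Set.union_subset hlS ((Function.support_const_smul_subset _ _).trans
          (hvC.trans (by exact_mod_cast hCS)))) hj
  have hl'W : l' ∈ W :=
    ih _ (erase_ssubset (hCS (hvC hi))) l' (by simp [l', mulVec_sub, mulVec_smul, hl, hv]) hl'S
  simpa [l'] using W.add_mem hl'W (W.smul_mem (l i / v i) hvW)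

theorem eq_signVector_of_forall_mem_range {c : n → ℝ}
    (hc : ∀ i, c i ∈ Set.range (SignType.cast : SignType → ℝ)) :
    c = signVector {i | c i = 1} {i | c i = -1} := by
  ext i
  obtain ⟨s, hs⟩ := hc i
  cases s <;> norm_num [signVector, ← hs, Set.indicator_apply]

theorem mulVec_indicator_one (A : Matrix k n ℝ) (S : Finset n) :
    A *ᵥ Set.indicator S 1 = ∑ i ∈ S, Aᵀ i := by
  rw [← sum_smul_transpose_eq_mulVec,
    ← Finset.sum_indicator_subset (fun i => (Aᵀ i : k → ℝ)) (subset_univ S)]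
  congr! with i
  by_cases hi : i ∈ S <;> simp [hi]

theorem mulVec_signVector (A : Matrix k n ℝ) (Cp Cm : Finset n) :
    A *ᵥ signVector Cp Cm = ∑ i ∈ Cp, Aᵀ i - ∑ i ∈ Cm, Aᵀ i := by
  rw [signVector, mulVec_sub, mulVec_indicator_one, mulVec_indicator_one]

theorem IsSignedCircuit.mulVec_signVector_eq_zero [Fintype k] [DecidableEq n] {A : Matrix k n ℝ}
    {Cp Cm : Finset n} (h : A.IsSignedCircuit Cp Cm) : A *ᵥ signVector Cp Cm = 0 := by
  rw [mulVec_signVector, h.2.2]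

theorem IsSignedCircuit.signVector_ne_zero [Fintype k] [DecidableEq n] {A : Matrix k n ℝ}
    {Cp Cm : Finset n} (h : A.IsSignedCircuit Cp Cm) : signVector Cp Cm ≠ 0 := by
  obtain ⟨i, hi⟩ := h.2.1.nonempty
  intro h0
  have := congrFun h0 i
  rcases Finset.mem_union.mp hi with hp | hm
  · simp [signVector, hp, Finset.disjoint_left.mp h.1 hp] at this
  · simp [signVector, hm, Finset.disjoint_right.mp h.1 hm] at this

theorem IsTotallyUnimodular.exists_signType_support_eq [Fintype k] {A : Matrix k n ℝ}
    (hA : A.IsTotallyUnimodular) {C : Finset n} (hC : A.IsCircuit C) :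
    ∃ c : n → ℝ, A *ᵥ c = 0 ∧ Function.support c = C ∧
      ∀ i, c i ∈ Set.range (SignType.cast : SignType → ℝ) := by
  classical
  obtain ⟨c, hc, hsupp⟩ := hC.exists_support_eq
  obtain ⟨i₀, hi₀⟩ := hC.nonempty
  have hci₀ : c i₀ ≠ 0 := by rwa [← Function.mem_support, hsupp]
  set c' := (-(c i₀)⁻¹) • c
  have hc' : A *ᵥ c' = 0 := by rw [mulVec_smul, hc, smul_zero]
  have hsupp' : Function.support c' = C := by
    rw [Function.support_const_smul_of_ne_zero _ _ (by simpa), hsupp]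
  have hci₀' : c' i₀ = -1 := by simp [c', hci₀]
  have hsum : ∑ i ∈ C.erase i₀, c' i • Aᵀ i = Aᵀ i₀ := by
    rw [← sum_smul_transpose_eq_mulVec_of_support_subset A hsupp'.subset,
      ← Finset.add_sum_erase C _ hi₀, hci₀', neg_one_smul, neg_add_eq_zero] at hc'
    exact hc'.symm
  refine ⟨c', hc', hsupp', fun i => ?_⟩
  by_cases hi : i ∈ C.erase i₀
  · exact hA.apply_mem_range_signType_of_sum_smul_eq (hC.2 _ (erase_ssubset hi₀)) hsum hi
  · rcases eq_or_ne i i₀ with rfl | hne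
    · exact ⟨-1, by simp [hci₀']⟩
    · have : i ∉ Function.support c' := by simpa [hsupp', hne] using hi
      exact ⟨0, by simp [Function.notMem_support.mp this]⟩

theorem IsTotallyUnimodular.exists_isSignedCircuit [Fintype k] [DecidableEq n] {A : Matrix k n ℝ}
    (hA : A.IsTotallyUnimodular) {C : Finset n} (hC : A.IsCircuit C) :
    ∃ Cp Cm : Finset n, A.IsSignedCircuit Cp Cm ∧ Cp ∪ Cm = C := by
  obtain ⟨c, hc, hsupp, hsign⟩ := hA.exists_signType_support_eq hC
  set Cp : Finset n := {i | c i = 1}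
  set Cm : Finset n := {i | c i = -1}
  have hunion : Cp ∪ Cm = C := by
    ext i
    rw [← Finset.mem_coe (s := C), ← hsupp, Function.mem_support]
    obtain ⟨s, hs⟩ := hsign i
    cases s <;> norm_num [Cp, Cm, ← hs]
  refine ⟨Cp, Cm, ⟨?_, hunion ▸ hC, ?_⟩, hunion⟩
  · exact Finset.disjoint_filter.mpr fun i _ h1 h2 => by norm_num [h1] at h2
  · rw [← mulVec_signVector, ← eq_signVector_of_forall_mem_range hsign, hc]

theorem IsTotallyUnimodular.ker_mulVecLin_le [Fintype k] [DecidableEq n] {k' : Type*} [Fintype k']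
    {A : Matrix k n ℝ} {A' : Matrix k' n ℝ} (hA : A.IsTotallyUnimodular)
    (h : ∀ Cp Cm : Finset n, A.IsSignedCircuit Cp Cm → A'.IsSignedCircuit Cp Cm) :
    LinearMap.ker A.mulVecLin ≤ LinearMap.ker A'.mulVecLin := by
  refine ker_mulVecLin_le_of_forall_isCircuit A _ fun C hC => ?_
  obtain ⟨Cp, Cm, hs, rfl⟩ := hA.exists_isSignedCircuit hC
  exact ⟨signVector Cp Cm, (h Cp Cm hs).mulVec_signVector_eq_zero,
    hs.mulVec_signVector_eq_zero, hs.signVector_ne_zero, support_signVector_subset Cp Cm⟩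

end Matrix

/-- If totally unimodular matrices `A` and `A'` have the same signed
circuits (realize the same regular oriented matroid), then the map sending the point
`∑ λ_i a_i` of the root polytope of `A` (with `λ_i ≥ 0`, `∑ λ_i = 1`) to `∑ λ_i a'_i`
is a well-defined bijection `conv{a_1,…,a_m} → conv{a'_1,…,a'_m}`. -/
theorem root_polytope_bijection_of_same_signed_circuits
    {k k' n : Type*} [Fintype k] [Fintype k'] [Fintype n] [DecidableEq n]
    (A : Matrix k n ℝ) (A' : Matrix k' n ℝ)
    (hA : A.IsTotallyUnimodular) (hA' : A'.IsTotallyUnimodular)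
    (hsame : ∀ Cp Cm : Finset n, A.IsSignedCircuit Cp Cm ↔ A'.IsSignedCircuit Cp Cm) :
    ∃ φ : (k → ℝ) → (k' → ℝ),
      Set.BijOn φ (convexHull ℝ (Set.range A.transpose))
        (convexHull ℝ (Set.range A'.transpose)) ∧
      ∀ lam : n → ℝ, (∀ i, 0 ≤ lam i) → (∑ i, lam i = 1) →
        φ (∑ i, lam i • A.transpose i) = ∑ i, lam i • A'.transpose i := by
  have hker : LinearMap.ker A.mulVecLin = LinearMap.ker A'.mulVecLin :=
    le_antisymm (hA.ker_mulVecLin_le fun Cp Cm => (hsame Cp Cm).mp)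
      (hA'.ker_mulVecLin_le fun Cp Cm => (hsame Cp Cm).mpr)
  refine ⟨A'.mulVecLin ∘ Function.invFun A.mulVecLin, ?_, fun lam _ _ => ?_⟩
  · rw [Matrix.convexHull_range_transpose, Matrix.convexHull_range_transpose]
    exact LinearMap.bijOn_comp_invFun_image_of_ker_eq hker _
  · rw [Matrix.sum_smul_transpose_eq_mulVec, Matrix.sum_smul_transpose_eq_mulVec]
    exact LinearMap.apply_invFun_apply_of_ker_le hker.le lam
end
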